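/- The Sinkhorn-EM map never overshoots the truth from positive initializations: for θ > 0 and a ∈ (0,1) with G(θ, a) = α*, one has F(θ, a) ≤ θ* when 0 < θ ≤ θ*, F(θ*, a) = θ* when θ = θ*, and F(θ, a) ≥ θ* when θ ≥ θ*. -/

import Mathlib

open MeasureTheory

/-- The standard Gaussian density. -/
noncomputable def stdGauss (y : ℝ) : ℝ :=
  (Real.sqrt (2 * Real.pi))⁻¹ * Real.exp (-y ^ 2 / 2)

/-- Density of the two-component mixture `α*·N(θ*,1) + (1-α*)·N(-θ*,1)`. -/
noncomputable def mixDen (θs αs y : ℝ) : ℝ :=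
  αs * stdGauss (y - θs) + (1 - αs) * stdGauss (y + θs)

/-- The EM/Sinkhorn-EM map `F(θ, α)`. -/
noncomputable def Fmap (θs αs θ α : ℝ) : ℝ :=
  ∫ y, y * (α * Real.exp (θ * y) - (1 - α) * Real.exp (-(θ * y))) /
      (α * Real.exp (θ * y) + (1 - α) * Real.exp (-(θ * y))) * mixDen θs αs y

/-- The tilting equation map `G(θ, α)`. -/
noncomputable def Gmap (θs αs θ α : ℝ) : ℝ :=
  ∫ y, α * Real.exp (θ * y) /
      (α * Real.exp (θ * y) + (1 - α) * Real.exp (-(θ * y))) * mixDen θs αs y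

/-- The (normalized) `θ`-derivative of the tilting equation, `G_θ(θ, α)`. -/
noncomputable def Gtheta (θs αs θ α : ℝ) : ℝ :=
  ∫ y, y / (α * Real.exp (θ * y) + (1 - α) * Real.exp (-(θ * y))) ^ 2 * mixDen θs αs y

/-!
Write `ℓ_{θ,a}(y) = θ y + ½ log (a / (1 - a))`; then `tanh ℓ_{θ,a}(y)` is the posterior mean of
the `±1` label of `y` under `a·N(θ,1) + (1-a)·N(-θ,1)`, so that `F(θ, a) = E[y tanh ℓ_{θ,a}]` and
`2 G(θ, a) - 1 = E[tanh ℓ_{θ,a}]`, expectations being taken under `q*`. At the truth, Bayes'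
rule gives `tanh ℓ_{θ*,α*} · q* = α* φ(· - θ*) - (1 - α*) φ(· + θ*)`, whence
`E[tanh ℓ_{θ*,α*}] = 2α* - 1` and `F(θ*, α*) = θ*`. The tilting equation therefore says
`E[tanh ℓ_{θ,a}] = E[tanh ℓ_{θ*,α*}]`, so the intercept part of `ℓ_{θ,a} - ℓ_{θ*,α*}` integrates
to zero against the difference of the tanh's:
  `(θ - θ*) (F(θ, a) - θ*) = E[(ℓ_{θ,a} - ℓ_{θ*,α*}) (tanh ℓ_{θ,a} - tanh ℓ_{θ*,α*})] ≥ 0`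
because tanh is increasing. When `θ = θ*` the difference of the tanh's has constant sign and
zero mean, so it vanishes `q*`-a.e. and `F(θ, a) = θ*`.
-/

open Real ProbabilityTheory

theorem Real.tanh_strictMono : StrictMono tanh := fun x y hxy => by
  have mem : ∀ z, tanh z ∈ Set.Ioo (-1) 1 := fun z => ⟨neg_one_lt_tanh z, tanh_lt_one z⟩
  rwa [← artanh_lt_artanh_iff (mem x) (mem y), artanh_tanh, artanh_tanh]

noncomputable def halfLogit (a : ℝ) : ℝ := log (a / (1 - a)) / 2

theorem tanh_add_halfLogit {a : ℝ} (h0 : 0 < a) (h1 : a < 1) (x : ℝ) :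
    tanh (x + halfLogit a) =
      (a * exp x - (1 - a) * exp (-x)) / (a * exp x + (1 - a) * exp (-x)) := by
  have hk : exp (log (a / (1 - a)) / 2) ^ 2 * (1 - a) = a := by
    rw [← exp_nat_mul, show ((2 : ℕ) : ℝ) * (log (a / (1 - a)) / 2) = log (a / (1 - a)) by ring,
      exp_log (div_pos h0 (by linarith)), div_mul_cancel₀ _ (by linarith)]
  have hk0 := exp_pos (log (a / (1 - a)) / 2)
  have hE := exp_pos x
  have hF := exp_pos (-x)
  rw [halfLogit, tanh_eq, neg_add, exp_add, exp_add, exp_neg (log _ / 2)]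
  generalize exp (log (a / (1 - a)) / 2) = k at hk hk0 ⊢
  rw [div_eq_div_iff (by positivity) (by nlinarith)]
  field_simp
  linear_combination 2 * exp x * exp (-x) * hk

section SingleCrossing

variable {f q : ℝ → ℝ} {C θ₁ θ₂ c₁ c₂ : ℝ}

theorem integrable_comp_affine_mul (hf : Measurable f) (hC : ∀ x, |f x| ≤ C)
    (hq : Integrable q) (θ c : ℝ) : Integrable fun y => f (θ * y + c) * q y :=
  hq.bdd_mul (hf.comp (by fun_prop)).aestronglyMeasurable (ae_of_all _ fun y => hC _)

theorem integrable_mul_comp_affine_mul (hf : Measurable f) (hC : ∀ x, |f x| ≤ C)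
    (hq : Integrable fun y => y * q y) (θ c : ℝ) : Integrable fun y => y * f (θ * y + c) * q y :=
  (hq.bdd_mul (hf.comp (by fun_prop : Measurable fun y : ℝ => θ * y + c)).aestronglyMeasurable
    (ae_of_all _ fun y => hC _)).congr
      (ae_of_all _ fun y => by simp only [Function.comp_apply]; ring)

theorem integral_affine_sub_mul_sub_mul (hf : Measurable f) (hC : ∀ x, |f x| ≤ C)
    (hq : Integrable q) (hyq : Integrable fun y => y * q y)
    (h : ∫ y, f (θ₁ * y + c₁) * q y = ∫ y, f (θ₂ * y + c₂) * q y) :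
    ∫ y, (θ₁ * y + c₁ - (θ₂ * y + c₂)) * (f (θ₁ * y + c₁) - f (θ₂ * y + c₂)) * q y =
      (θ₁ - θ₂) * ((∫ y, y * f (θ₁ * y + c₁) * q y) - ∫ y, y * f (θ₂ * y + c₂) * q y) := by
  have h₁ := integrable_comp_affine_mul hf hC hq θ₁ c₁
  have h₂ := integrable_comp_affine_mul hf hC hq θ₂ c₂
  have hy₁ := integrable_mul_comp_affine_mul hf hC hyq θ₁ c₁
  have hy₂ := integrable_mul_comp_affine_mul hf hC hyq θ₂ c₂
  have hsplit : ∀ y, (θ₁ * y + c₁ - (θ₂ * y + c₂)) * (f (θ₁ * y + c₁) - f (θ₂ * y + c₂)) * q y =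
      (θ₁ - θ₂) * (y * f (θ₁ * y + c₁) * q y - y * f (θ₂ * y + c₂) * q y) +
        (c₁ - c₂) * (f (θ₁ * y + c₁) * q y - f (θ₂ * y + c₂) * q y) := fun y => by ring
  have hA : Integrable fun y =>
      (θ₁ - θ₂) * (y * f (θ₁ * y + c₁) * q y - y * f (θ₂ * y + c₂) * q y) :=
    (hy₁.sub hy₂).const_mul _
  have hB : Integrable fun y => (c₁ - c₂) * (f (θ₁ * y + c₁) * q y - f (θ₂ * y + c₂) * q y) :=
    (h₁.sub h₂).const_mul _
  simp only [hsplit]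
  rw [integral_add hA hB, integral_const_mul, integral_const_mul, integral_sub hy₁ hy₂,
    integral_sub h₁ h₂, h, sub_self, mul_zero, add_zero]

theorem sub_mul_integral_mul_comp_affine_sub_nonneg (hf : Monotone f) (hC : ∀ x, |f x| ≤ C)
    (hq0 : 0 ≤ q) (hq : Integrable q) (hyq : Integrable fun y => y * q y)
    (h : ∫ y, f (θ₁ * y + c₁) * q y = ∫ y, f (θ₂ * y + c₂) * q y) :
    0 ≤ (θ₁ - θ₂) * ((∫ y, y * f (θ₁ * y + c₁) * q y) - ∫ y, y * f (θ₂ * y + c₂) * q y) := by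
  rw [← integral_affine_sub_mul_sub_mul hf.measurable hC hq hyq h]
  refine integral_nonneg fun y => mul_nonneg ?_ (hq0 y)
  rcases le_total (θ₂ * y + c₂) (θ₁ * y + c₁) with hle | hle
  · exact mul_nonneg (sub_nonneg.2 hle) (sub_nonneg.2 (hf hle))
  · exact mul_nonneg_of_nonpos_of_nonpos (sub_nonpos.2 hle) (sub_nonpos.2 (hf hle))

theorem integral_mul_comp_affine_eq_of_integral_comp_affine_eq (hf : Monotone f)
    (hC : ∀ x, |f x| ≤ C) (hq0 : 0 ≤ q) (hq : Integrable q) (hyq : Integrable fun y => y * q y)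
    {θ : ℝ} (h : ∫ y, f (θ * y + c₁) * q y = ∫ y, f (θ * y + c₂) * q y) :
    ∫ y, y * f (θ * y + c₁) * q y = ∫ y, y * f (θ * y + c₂) * q y := by
  wlog hc : c₁ ≤ c₂ generalizing c₁ c₂
  · exact (this h.symm (le_of_not_ge hc)).symm
  have hm := hf.measurable
  have h₁ := integrable_comp_affine_mul hm hC hq θ c₁
  have h₂ := integrable_comp_affine_mul hm hC hq θ c₂
  have hgap : (fun y => (f (θ * y + c₂) - f (θ * y + c₁)) * q y) =ᵐ[volume] 0 := by
    refine (integral_eq_zero_iff_of_nonneg (fun y => ?_)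
      ((h₂.sub h₁).congr (ae_of_all _ fun y => (sub_mul _ _ _).symm))).1 ?_
    · exact mul_nonneg (sub_nonneg.2 (hf (by linarith))) (hq0 y)
    · simp only [sub_mul]
      rw [integral_sub h₂ h₁, h, sub_self]
  rw [← sub_eq_zero, ← integral_sub (integrable_mul_comp_affine_mul hm hC hyq θ c₁)
    (integrable_mul_comp_affine_mul hm hC hyq θ c₂)]
  refine integral_eq_zero_of_ae (hgap.mono fun y hy => ?_)
  simp only [Pi.zero_apply] at hy ⊢
  linear_combination -y * hy

end SingleCrossing

theorem stdGauss_sub (θ y : ℝ) : stdGauss (y - θ) = gaussianPDFReal θ 1 y := by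
  simp [stdGauss, gaussianPDFReal]

theorem stdGauss_add (θ y : ℝ) : stdGauss (y + θ) = gaussianPDFReal (-θ) 1 y := by
  rw [← stdGauss_sub, sub_neg_eq_add]

theorem stdGauss_sub_eq_exp_mul (θ y : ℝ) :
    stdGauss (y - θ) = exp (θ * y) * (exp (-θ ^ 2 / 2) * stdGauss y) := by
  simp only [stdGauss, mul_left_comm _ (√(2 * π))⁻¹, ← exp_add]
  ring_nf

theorem integrable_mul_gaussianPDFReal (μ : ℝ) (v : NNReal) :
    Integrable fun y => y * gaussianPDFReal μ v y := by
  rcases eq_or_ne v 0 with rfl | hv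
  · simp
  have h := (memLp_one_iff_integrable.1 (memLp_id_gaussianReal (μ := μ) (v := v) 1))
  rw [gaussianReal_of_var_ne_zero _ hv, integrable_withDensity_iff_integrable_smul'
    (measurable_gaussianPDF _ _) (ae_of_all _ fun _ => gaussianPDF_lt_top)] at h
  simpa [mul_comm] using h

theorem integral_mul_gaussianPDFReal (μ : ℝ) {v : NNReal} (hv : v ≠ 0) :
    ∫ y, y * gaussianPDFReal μ v y = μ := by
  simpa [mul_comm] using (integral_gaussianReal_eq_integral_smul (f := id) hv).symm.trans
    integral_id_gaussianReal

section Mixture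

variable (θ : ℝ)

theorem mixDen_eq_gaussianPDFReal (α y : ℝ) :
    mixDen θ α y = α * gaussianPDFReal θ 1 y + (1 - α) * gaussianPDFReal (-θ) 1 y := by
  rw [mixDen, stdGauss_sub, stdGauss_add]

theorem mixDen_nonneg {α : ℝ} (h0 : 0 ≤ α) (h1 : α ≤ 1) (y : ℝ) : 0 ≤ mixDen θ α y := by
  rw [mixDen_eq_gaussianPDFReal]
  have := gaussianPDFReal_nonneg θ 1 y
  have := gaussianPDFReal_nonneg (-θ) 1 y
  nlinarith

theorem integrable_mixDen (α : ℝ) : Integrable (mixDen θ α) := by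
  simp only [funext (mixDen_eq_gaussianPDFReal θ α)]
  exact ((integrable_gaussianPDFReal _ _).const_mul _).add
    ((integrable_gaussianPDFReal _ _).const_mul _)

theorem integrable_mul_mixDen (α : ℝ) : Integrable fun y => y * mixDen θ α y := by
  simp only [mixDen_eq_gaussianPDFReal, mul_add, mul_left_comm _ α, mul_left_comm _ (1 - α)]
  exact ((integrable_mul_gaussianPDFReal _ _).const_mul _).add
    ((integrable_mul_gaussianPDFReal _ _).const_mul _)

theorem integral_mixDen (α : ℝ) : ∫ y, mixDen θ α y = 1 := by
  simp only [mixDen_eq_gaussianPDFReal]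
  rw [integral_add ((integrable_gaussianPDFReal _ _).const_mul _)
    ((integrable_gaussianPDFReal _ _).const_mul _), integral_const_mul, integral_const_mul,
    integral_gaussianPDFReal_eq_one _ one_ne_zero, integral_gaussianPDFReal_eq_one _ one_ne_zero]
  ring

theorem tanh_add_halfLogit_mul_mixDen {α : ℝ} (h0 : 0 < α) (h1 : α < 1) (y : ℝ) :
    tanh (θ * y + halfLogit α) * mixDen θ α y =
      α * gaussianPDFReal θ 1 y - (1 - α) * gaussianPDFReal (-θ) 1 y := by
  have e₁ := stdGauss_sub_eq_exp_mul θ y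
  have e₂ := stdGauss_sub_eq_exp_mul (-θ) y
  rw [sub_neg_eq_add, neg_sq, neg_mul] at e₂
  have hd : 0 < α * exp (θ * y) + (1 - α) * exp (-(θ * y)) := by
    have := exp_pos (θ * y); have := exp_pos (-(θ * y)); nlinarith
  rw [tanh_add_halfLogit h0 h1, mixDen, ← stdGauss_sub, ← stdGauss_add, e₁, e₂]
  field_simp

theorem integral_tanh_add_halfLogit_mul_mixDen {α : ℝ} (h0 : 0 < α) (h1 : α < 1) :
    ∫ y, tanh (θ * y + halfLogit α) * mixDen θ α y = 2 * α - 1 := by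
  simp only [tanh_add_halfLogit_mul_mixDen θ h0 h1]
  rw [integral_sub ((integrable_gaussianPDFReal _ _).const_mul _)
    ((integrable_gaussianPDFReal _ _).const_mul _), integral_const_mul, integral_const_mul,
    integral_gaussianPDFReal_eq_one _ one_ne_zero, integral_gaussianPDFReal_eq_one _ one_ne_zero]
  ring

theorem integral_mul_tanh_add_halfLogit_mul_mixDen {α : ℝ} (h0 : 0 < α) (h1 : α < 1) :
    ∫ y, y * tanh (θ * y + halfLogit α) * mixDen θ α y = θ := by
  simp only [mul_assoc, tanh_add_halfLogit_mul_mixDen θ h0 h1, mul_sub, mul_left_comm _ α,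
    mul_left_comm _ (1 - α)]
  rw [integral_sub ((integrable_mul_gaussianPDFReal _ _).const_mul _)
    ((integrable_mul_gaussianPDFReal _ _).const_mul _), integral_const_mul, integral_const_mul,
    integral_mul_gaussianPDFReal _ one_ne_zero, integral_mul_gaussianPDFReal _ one_ne_zero]
  ring

end Mixture

section EMMaps

variable {θs αs θ a : ℝ}

theorem Fmap_eq_integral_tanh (ha0 : 0 < a) (ha1 : a < 1) :
    Fmap θs αs θ a = ∫ y, y * tanh (θ * y + halfLogit a) * mixDen θs αs y := by
  simp only [Fmap, tanh_add_halfLogit ha0 ha1, mul_div_assoc]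

theorem two_mul_Gmap_sub_one (ha0 : 0 < a) (ha1 : a < 1) :
    2 * Gmap θs αs θ a - 1 = ∫ y, tanh (θ * y + halfLogit a) * mixDen θs αs y := by
  have hpt : ∀ y, a * exp (θ * y) / (a * exp (θ * y) + (1 - a) * exp (-(θ * y))) *
      mixDen θs αs y = (mixDen θs αs y + tanh (θ * y + halfLogit a) * mixDen θs αs y) / 2 := by
    intro y
    have hd : 0 < a * exp (θ * y) + (1 - a) * exp (-(θ * y)) := by
      have := exp_pos (θ * y); have := exp_pos (-(θ * y)); nlinarith
    rw [tanh_add_halfLogit ha0 ha1]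
    field_simp
    ring
  rw [Gmap]
  simp only [hpt]
  rw [integral_div, integral_add (integrable_mixDen _ _) (integrable_comp_affine_mul
    tanh_strictMono.monotone.measurable (fun x => (abs_tanh_lt_one x).le) (integrable_mixDen _ _)
    _ _), integral_mixDen]
  ring

theorem Gmap_self (h0 : 0 < αs) (h1 : αs < 1) : Gmap θs αs θs αs = αs := by
  have h := two_mul_Gmap_sub_one (θs := θs) (αs := αs) (θ := θs) h0 h1
  rw [integral_tanh_add_halfLogit_mul_mixDen θs h0 h1] at h
  linarith

theorem Fmap_self (h0 : 0 < αs) (h1 : αs < 1) : Fmap θs αs θs αs = θs := by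
  rw [Fmap_eq_integral_tanh h0 h1, integral_mul_tanh_add_halfLogit_mul_mixDen θs h0 h1]

theorem sub_mul_sub_Fmap_nonneg {θ' a' : ℝ} (hαs0 : 0 ≤ αs) (hαs1 : αs ≤ 1) (ha0 : 0 < a)
    (ha1 : a < 1) (ha0' : 0 < a') (ha1' : a' < 1) (h : Gmap θs αs θ a = Gmap θs αs θ' a') :
    0 ≤ (θ - θ') * (Fmap θs αs θ a - Fmap θs αs θ' a') := by
  rw [Fmap_eq_integral_tanh ha0 ha1, Fmap_eq_integral_tanh ha0' ha1']
  refine sub_mul_integral_mul_comp_affine_sub_nonneg tanh_strictMono.monotone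
    (fun x => (abs_tanh_lt_one x).le) (mixDen_nonneg θs hαs0 hαs1) (integrable_mixDen _ _)
    (integrable_mul_mixDen _ _) ?_
  rw [← two_mul_Gmap_sub_one ha0 ha1, ← two_mul_Gmap_sub_one ha0' ha1', h]

theorem Fmap_eq_of_Gmap_eq {a' : ℝ} (hαs0 : 0 ≤ αs) (hαs1 : αs ≤ 1) (ha0 : 0 < a)
    (ha1 : a < 1) (ha0' : 0 < a') (ha1' : a' < 1) (h : Gmap θs αs θ a = Gmap θs αs θ a') :
    Fmap θs αs θ a = Fmap θs αs θ a' := by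
  rw [Fmap_eq_integral_tanh ha0 ha1, Fmap_eq_integral_tanh ha0' ha1']
  refine integral_mul_comp_affine_eq_of_integral_comp_affine_eq tanh_strictMono.monotone
    (fun x => (abs_tanh_lt_one x).le) (mixDen_nonneg θs hαs0 hαs1) (integrable_mixDen _ _)
    (integrable_mul_mixDen _ _) ?_
  rw [← two_mul_Gmap_sub_one ha0 ha1, ← two_mul_Gmap_sub_one ha0' ha1', h]

end EMMaps

theorem sinkhornEM_map_no_overshoot_general
    (θs αs : ℝ) (hαs : 1 / 2 ≤ αs) (hαs1 : αs < 1)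
    (θ : ℝ) (a : ℝ) (ha : a ∈ Set.Ioo (0 : ℝ) 1)
    (hG : Gmap θs αs θ a = αs) :
    (θ ≤ θs → Fmap θs αs θ a ≤ θs) ∧
    (θ = θs → Fmap θs αs θ a = θs) ∧
    (θs ≤ θ → θs ≤ Fmap θs αs θ a) := by
  obtain ⟨ha0, ha1⟩ := ha
  have hαs0 : 0 < αs := by linarith
  have hG' : Gmap θs αs θ a = Gmap θs αs θs αs := hG.trans (Gmap_self hαs0 hαs1).symm
  have hcross := sub_mul_sub_Fmap_nonneg hαs0.le hαs1.le ha0 ha1 hαs0 hαs1 hG'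
  rw [Fmap_self hαs0 hαs1] at hcross
  have hfix : θ = θs → Fmap θs αs θ a = θs := by
    rintro rfl
    rw [Fmap_eq_of_Gmap_eq hαs0.le hαs1.le ha0 ha1 hαs0 hαs1 hG', Fmap_self hαs0 hαs1]
  refine ⟨fun hle => ?_, hfix, fun hge => ?_⟩
  · rcases hle.lt_or_eq with hlt | heq
    · exact sub_nonpos.1 (nonpos_of_mul_nonneg_right hcross (sub_neg.2 hlt))
    · exact (hfix heq).le
  · rcases hge.lt_or_eq with hlt | heq
    · exact sub_nonneg.1 (nonneg_of_mul_nonneg_right hcross (sub_pos.2 hlt))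
    · exact (hfix heq.symm).ge

/-- the Sinkhorn-EM map never overshoots the truth from positive
initializations: for `θ > 0` and tilted weight `a ∈ (0,1)` with `G(θ, a) = α*`,
`F(θ, a) ≤ θ*` if `θ ≤ θ*`, `F(θ, a) = θ*` if `θ = θ*`, and `F(θ, a) ≥ θ*` if `θ ≥ θ*`. -/
theorem sinkhornEM_map_no_overshoot
    (θs αs : ℝ) (hθs : 0 < θs) (hαs : 1 / 2 ≤ αs) (hαs1 : αs < 1)
    (θ : ℝ) (hθ : 0 < θ) (a : ℝ) (ha : a ∈ Set.Ioo (0 : ℝ) 1)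
    (hG : Gmap θs αs θ a = αs) :
    (θ ≤ θs → Fmap θs αs θ a ≤ θs) ∧
    (θ = θs → Fmap θs αs θ a = θs) ∧
    (θs ≤ θ → θs ≤ Fmap θs αs θ a) :=
  sinkhornEM_map_no_overshoot_general θs αs hαs hαs1 θ a ha hG
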